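/- arXiv:2108.11045 — 2 statements merged into one kernel-verified Lean document; each statement's English description precedes it below -/
import Mathlib

section
/- Let Ĝ : ℝⁿ → ℝ^{n×m} be L_G-Lipschitz with respect to the operator (spectral) norm, with Ĝ(0) = G₀ = R·H₀ where H₀ ∈ ℝ^{m×m} is invertible and G₀ ≠ 0, and suppose Ĝ(y) = R·Ĥ(y) for all y ∈ ℝⁿ for some Ĥ : ℝⁿ → ℝ^{m×m}. Let σ be the smallest nonzero singular value of G₀. Then for every x ∈ ℝⁿ with L_G·‖x‖ < σ, the smallest nonzero singular value of Ĝ(x) is at least σ − L_G·‖x‖. -/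
open Matrix Set

noncomputable def matOpNorm {n m : ℕ} (M : Matrix (Fin n) (Fin m) ℝ) : ℝ :=
  ‖LinearMap.toContinuousLinearMap (Matrix.toEuclideanLin M)‖

noncomputable def appMat {n m : ℕ} (M : Matrix (Fin n) (Fin m) ℝ)
    (v : EuclideanSpace ℝ (Fin m)) : EuclideanSpace ℝ (Fin n) :=
  Matrix.toEuclideanLin M v

noncomputable def colSpace {n m : ℕ} (M : Matrix (Fin n) (Fin m) ℝ) :
    Submodule ℝ (EuclideanSpace ℝ (Fin n)) :=
  LinearMap.range (Matrix.toEuclideanLin M)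

noncomputable def minSV {n m : ℕ} (M : Matrix (Fin n) (Fin m) ℝ) : ℝ :=
  Real.sqrt (sInf {μ : ℝ | μ ≠ 0 ∧
    ∃ i, (Matrix.isHermitian_conjTranspose_mul_self M).eigenvalues i = μ})

/-!
Let `f`, `g` be the linear maps of `Ĝ(x)` and `G₀` and `W = (ker g)ᗮ`, on which `‖g w‖ ≥ σ ‖w‖`.
Since `‖f - g‖ ≤ L_G ‖x‖`, also `‖f w‖ ≥ (σ - L_G ‖x‖) ‖w‖` on `W`, so `f` is injective there.
Both maps factor through `R` and `H₀` is invertible, so `range f ⊆ range g`; counting dimensions,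
`ker f ⊕ W` is then the whole space. Every `v ∈ (ker f)ᗮ` is the shortest vector of `v + ker f`,
which meets `W` in some `w` with `f v = f w`, so `‖f v‖ ≥ (σ - L_G ‖x‖) ‖w‖ ≥ (σ - L_G ‖x‖) ‖v‖`.
A lower bound for `‖f v‖ / ‖v‖` on `(ker f)ᗮ` bounds the smallest nonzero singular value of `f`.
-/

open Module LinearMap Submodule

section InnerProductSpace

variable {𝕜 E F : Type*} [RCLike 𝕜] [NormedAddCommGroup E] [InnerProductSpace 𝕜 E]

theorem norm_le_of_mem_orthogonal_of_sub_mem {K : Submodule 𝕜 E} {v w : E} (hv : v ∈ Kᗮ)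
    (hwv : w - v ∈ K) : ‖v‖ ≤ ‖w‖ := by
  have hvw : ‖v‖ ^ 2 ≤ ‖v‖ * ‖w‖ :=
    calc ‖v‖ ^ 2 = RCLike.re (inner 𝕜 v w) := by
          rw [← sub_add_cancel w v, inner_add_right, inner_left_of_mem_orthogonal hwv hv, zero_add,
            inner_self_eq_norm_sq]
      _ ≤ ‖v‖ * ‖w‖ := re_inner_le_norm v w
  nlinarith [norm_nonneg v, norm_nonneg w]

variable [SeminormedAddCommGroup F] [Module 𝕜 F] (f : E →ₗ[𝕜] F) {W : Submodule 𝕜 E} {c : ℝ}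

theorem disjoint_ker_of_forall_mul_norm_le (hc : 0 < c) (hfW : ∀ w ∈ W, c * ‖w‖ ≤ ‖f w‖) :
    Disjoint f.ker W := by
  refine disjoint_def.2 fun w hk hw => norm_le_zero_iff.1 (le_of_mul_le_mul_left ?_ hc)
  simpa [mem_ker.1 hk] using hfW w hw

theorem mul_norm_le_norm_apply_of_mem_orthogonal_ker (hW : f.ker ⊔ W = ⊤) (hc : 0 ≤ c)
    (hfW : ∀ w ∈ W, c * ‖w‖ ≤ ‖f w‖) {v : E} (hv : v ∈ f.kerᗮ) : c * ‖v‖ ≤ ‖f v‖ := by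
  obtain ⟨k, hk, w, hw, rfl⟩ := mem_sup.1 (hW ▸ mem_top : v ∈ f.ker ⊔ W)
  have hvw : ‖k + w‖ ≤ ‖w‖ :=
    norm_le_of_mem_orthogonal_of_sub_mem hv (by simpa using neg_mem hk)
  calc c * ‖k + w‖ ≤ c * ‖w‖ := mul_le_mul_of_nonneg_left hvw hc
    _ ≤ ‖f w‖ := hfW w hw
    _ = ‖f (k + w)‖ := by rw [map_add, mem_ker.1 hk, zero_add]

end InnerProductSpace

section FiniteDimensional

variable {𝕜 E F G : Type*} [RCLike 𝕜] [NormedAddCommGroup E] [InnerProductSpace 𝕜 E]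
  [FiniteDimensional 𝕜 E] [AddCommGroup F] [Module 𝕜 F] [AddCommGroup G] [Module 𝕜 G]
  (f : E →ₗ[𝕜] F) (g : E →ₗ[𝕜] G)

theorem ker_sup_orthogonal_ker_eq_top (hrank : finrank 𝕜 f.range ≤ finrank 𝕜 g.range)
    (hdisj : Disjoint f.ker g.kerᗮ) : f.ker ⊔ g.kerᗮ = ⊤ := by
  apply eq_top_of_finrank_eq
  have hsup := finrank_sup_add_finrank_inf_eq f.ker g.kerᗮ
  rw [hdisj.eq_bot, finrank_bot] at hsup
  have := finrank_range_add_finrank_ker f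
  have := finrank_range_add_finrank_ker g
  have := g.ker.finrank_add_finrank_orthogonal
  have := finrank_le (f.ker ⊔ g.kerᗮ)
  omega

theorem ne_zero_of_disjoint_ker_orthogonal_ker (hdisj : Disjoint f.ker g.kerᗮ) (hg : g ≠ 0) :
    f ≠ 0 := by
  rintro rfl
  rw [ker_zero, top_disjoint, orthogonal_eq_bot_iff, ker_eq_top] at hdisj
  exact hg hdisj

end FiniteDimensional

theorem range_toEuclideanLin_mul_le_of_isUnit {𝕜 ι κ : Type*} [RCLike 𝕜] [Fintype ι]
    [Fintype κ] [DecidableEq κ] (R : Matrix ι κ 𝕜) (H : Matrix κ κ 𝕜) {H₀ : Matrix κ κ 𝕜}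
    (hH₀ : IsUnit H₀) : (toEuclideanLin (R * H)).range ≤ (toEuclideanLin (R * H₀)).range := by
  obtain ⟨u, rfl⟩ := hH₀
  rw [← Units.mul_inv_cancel_left u H, ← Matrix.mul_assoc R, toLpLin_mul_same]
  exact range_comp_le_range _ _

theorem norm_toEuclideanLin_apply_le {n m : ℕ} (M : Matrix (Fin n) (Fin m) ℝ)
    (v : EuclideanSpace ℝ (Fin m)) : ‖toEuclideanLin M v‖ ≤ matOpNorm M * ‖v‖ :=
  (toEuclideanLin M).toContinuousLinearMap.le_opNorm v

section SingularValues

open scoped RealInnerProductSpace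

variable {n m : ℕ} (M : Matrix (Fin n) (Fin m) ℝ)

local notation "𝓗" => isHermitian_conjTranspose_mul_self M

theorem inner_toEuclideanLin_eigenvectorBasis (i : Fin m) (v : EuclideanSpace ℝ (Fin m)) :
    ⟪toEuclideanLin M ((𝓗).eigenvectorBasis i), toEuclideanLin M v⟫ =
      (𝓗).eigenvalues i * ⟪(𝓗).eigenvectorBasis i, v⟫ := by
  have h : toEuclideanLin (Mᴴ * M) ((𝓗).eigenvectorBasis i) =
      (𝓗).eigenvalues i • (𝓗).eigenvectorBasis i :=
    WithLp.ofLp_injective _ ((𝓗).mulVec_eigenvectorBasis i)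
  rw [← adjoint_inner_left, ← toEuclideanLin_conjTranspose_eq_adjoint, ← LinearMap.comp_apply,
    ← toLpLin_mul_same, h, real_inner_smul_left]

theorem norm_toEuclideanLin_sq_eq_sum (v : EuclideanSpace ℝ (Fin m)) :
    ‖toEuclideanLin M v‖ ^ 2 = ∑ i, (𝓗).eigenvalues i * ⟪(𝓗).eigenvectorBasis i, v⟫ ^ 2 := by
  rw [← real_inner_self_eq_norm_sq]
  nth_rw 1 [← (𝓗).eigenvectorBasis.sum_repr' v]
  simp only [map_sum, map_smul, sum_inner, real_inner_smul_left,
    inner_toEuclideanLin_eigenvectorBasis]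
  exact Finset.sum_congr rfl fun i _ => by ring

theorem norm_toEuclideanLin_eigenvectorBasis_sq (i : Fin m) :
    ‖toEuclideanLin M ((𝓗).eigenvectorBasis i)‖ ^ 2 = (𝓗).eigenvalues i := by
  rw [← real_inner_self_eq_norm_sq, inner_toEuclideanLin_eigenvectorBasis,
    real_inner_self_eq_norm_sq, (𝓗).eigenvectorBasis.orthonormal.1 i, one_pow, mul_one]

theorem eigenvectorBasis_mem_orthogonal_ker {i : Fin m} (hi : (𝓗).eigenvalues i ≠ 0) :
    (𝓗).eigenvectorBasis i ∈ (toEuclideanLin M).kerᗮ := fun k hk => by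
  have := inner_toEuclideanLin_eigenvectorBasis M i k
  rw [mem_ker.1 hk, inner_zero_right, eq_comm, mul_eq_zero] at this
  rw [real_inner_comm]
  exact this.resolve_left hi

theorem minSV_nonneg : 0 ≤ minSV M :=
  Real.sqrt_nonneg _

theorem sq_minSV : minSV M ^ 2 = sInf {μ : ℝ | μ ≠ 0 ∧ ∃ i, (𝓗).eigenvalues i = μ} := by
  refine Real.sq_sqrt (Real.sInf_nonneg ?_)
  rintro _ ⟨-, i, rfl⟩
  exact eigenvalues_conjTranspose_mul_self_nonneg M i

theorem minSV_mul_norm_le_of_mem_orthogonal_ker {v : EuclideanSpace ℝ (Fin m)}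
    (hv : v ∈ (toEuclideanLin M).kerᗮ) : minSV M * ‖v‖ ≤ ‖toEuclideanLin M v‖ := by
  have hcoef (i : Fin m) : minSV M ^ 2 * ⟪(𝓗).eigenvectorBasis i, v⟫ ^ 2 ≤
      (𝓗).eigenvalues i * ⟪(𝓗).eigenvectorBasis i, v⟫ ^ 2 := by
    by_cases hi : (𝓗).eigenvalues i = 0
    · have hker : (𝓗).eigenvectorBasis i ∈ (toEuclideanLin M).ker := by
        rw [mem_ker, ← norm_eq_zero, ← sq_eq_zero_iff, norm_toEuclideanLin_eigenvectorBasis_sq, hi]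
      rw [inner_right_of_mem_orthogonal hker hv]
      simp
    · refine mul_le_mul_of_nonneg_right ?_ (sq_nonneg _)
      rw [sq_minSV]
      exact csInf_le ((Set.finite_range (𝓗).eigenvalues).subset fun _ h => h.2).bddBelow
        ⟨hi, i, rfl⟩
  rw [← pow_le_pow_iff_left₀ (mul_nonneg (minSV_nonneg M) (norm_nonneg v)) (norm_nonneg _)
    two_ne_zero, mul_pow, norm_toEuclideanLin_sq_eq_sum,
    ← (𝓗).eigenvectorBasis.sum_sq_inner_right v, Finset.mul_sum]
  exact Finset.sum_le_sum fun i _ => hcoef i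

theorem le_minSV_of_forall_mem_orthogonal_ker {c : ℝ} (hM : M ≠ 0) (hc : 0 ≤ c)
    (h : ∀ v ∈ (toEuclideanLin M).kerᗮ, c * ‖v‖ ≤ ‖toEuclideanLin M v‖) : c ≤ minSV M := by
  obtain ⟨i, hi⟩ : ∃ i, (𝓗).eigenvalues i ≠ 0 := by
    by_contra! h0
    exact hM (conjTranspose_mul_self_eq_zero.1 ((𝓗).eigenvalues_eq_zero_iff.1 (funext h0)))
  rw [← pow_le_pow_iff_left₀ hc (minSV_nonneg M) two_ne_zero, sq_minSV]
  refine le_csInf ⟨_, hi, i, rfl⟩ ?_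
  rintro _ ⟨hμ, j, rfl⟩
  have hj := h _ (eigenvectorBasis_mem_orthogonal_ker M hμ)
  rw [(𝓗).eigenvectorBasis.orthonormal.1 j, mul_one] at hj
  rw [← norm_toEuclideanLin_eigenvectorBasis_sq]
  exact pow_le_pow_left₀ hc hj 2

end SingularValues

theorem minSV_lower_bound_general {n m : ℕ} (R : Matrix (Fin n) (Fin m) ℝ) (LG : ℝ)
    (Gh : EuclideanSpace ℝ (Fin n) → Matrix (Fin n) (Fin m) ℝ)
    (hLip : ∀ y z, matOpNorm (Gh y - Gh z) ≤ LG * ‖y - z‖)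
    (H₀ : Matrix (Fin m) (Fin m) ℝ) (hH₀ : IsUnit H₀)
    (G₀ : Matrix (Fin n) (Fin m) ℝ) (hG₀fac : G₀ = R * H₀)
    (hGh0 : Gh 0 = G₀) (hG₀ : G₀ ≠ 0)
    (Hh : EuclideanSpace ℝ (Fin n) → Matrix (Fin m) (Fin m) ℝ)
    (hfac : ∀ y, Gh y = R * Hh y)
    (x : EuclideanSpace ℝ (Fin n)) (hx : LG * ‖x‖ < minSV G₀) :
    minSV G₀ - LG * ‖x‖ ≤ minSV (Gh x) := by
  have hrange :
      finrank ℝ (toEuclideanLin (Gh x)).range ≤ finrank ℝ (toEuclideanLin G₀).range := by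
    refine Submodule.finrank_mono ?_
    rw [hfac, hG₀fac]
    exact range_toEuclideanLin_mul_le_of_isUnit R (Hh x) hH₀
  set f := toEuclideanLin (Gh x)
  set g := toEuclideanLin G₀
  have hfg (v : EuclideanSpace ℝ (Fin m)) : ‖f v - g v‖ ≤ LG * ‖x‖ * ‖v‖ := by
    have hLip₀ := hLip x 0
    rw [sub_zero, hGh0] at hLip₀
    calc ‖f v - g v‖ = ‖toEuclideanLin (Gh x - G₀) v‖ := by rw [map_sub, LinearMap.sub_apply]
      _ ≤ matOpNorm (Gh x - G₀) * ‖v‖ := norm_toEuclideanLin_apply_le _ v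
      _ ≤ LG * ‖x‖ * ‖v‖ := by gcongr
  have hfW : ∀ w ∈ g.kerᗮ, (minSV G₀ - LG * ‖x‖) * ‖w‖ ≤ ‖f w‖ := fun w hw => by
    have := norm_sub_norm_le (g w) (f w)
    rw [norm_sub_rev] at this
    linarith [minSV_mul_norm_le_of_mem_orthogonal_ker G₀ hw, hfg w]
  have hdisj := disjoint_ker_of_forall_mul_norm_le f (sub_pos.2 hx) hfW
  have hf : Gh x ≠ 0 := fun h => ne_zero_of_disjoint_ker_orthogonal_ker f g hdisj
    (toEuclideanLin.map_ne_zero_iff.2 hG₀) (by simp [f, h])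
  have hW : f.ker ⊔ g.kerᗮ = ⊤ := ker_sup_orthogonal_ker_eq_top f g hrange hdisj
  exact le_minSV_of_forall_mem_orthogonal_ker _ hf (sub_nonneg.2 hx.le) fun v hv =>
    mul_norm_le_norm_apply_of_mem_orthogonal_ker f hW (sub_nonneg.2 hx.le) hfW hv

/-- If `Ĝ` is `L_G`-Lipschitz in the operator norm with
`Ĝ 0 = G₀ = R * H₀`, `H₀` invertible, `G₀ ≠ 0`, and `Ĝ y = R * Ĥ y` for all `y`,
then for every `x` with `L_G * ‖x‖ < σ` (σ the smallest nonzero singular value of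
`G₀`), the smallest nonzero singular value of `Ĝ x` is at least `σ − L_G * ‖x‖`. -/
theorem minSV_lower_bound {n m : ℕ} (R : Matrix (Fin n) (Fin m) ℝ) (LG : ℝ)
    (hLG : 0 < LG)
    (Gh : EuclideanSpace ℝ (Fin n) → Matrix (Fin n) (Fin m) ℝ)
    (hLip : ∀ y z, matOpNorm (Gh y - Gh z) ≤ LG * ‖y - z‖)
    (H₀ : Matrix (Fin m) (Fin m) ℝ) (hH₀ : IsUnit H₀)
    (G₀ : Matrix (Fin n) (Fin m) ℝ) (hG₀fac : G₀ = R * H₀)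
    (hGh0 : Gh 0 = G₀) (hG₀ : G₀ ≠ 0)
    (Hh : EuclideanSpace ℝ (Fin n) → Matrix (Fin m) (Fin m) ℝ)
    (hfac : ∀ y, Gh y = R * Hh y)
    (x : EuclideanSpace ℝ (Fin n)) (hx : LG * ‖x‖ < minSV G₀) :
    minSV G₀ - LG * ‖x‖ ≤ minSV (Gh x) :=
  minSV_lower_bound_general R LG Gh hLip H₀ hH₀ G₀ hG₀fac hGh0 hG₀ Hh hfac x hx
end

section
/- Suppose x ∈ ℝⁿ satisfies (L_f + L_G)·‖x‖ < σ. Then for every vector v ∈ ℝⁿ with v − f₀ ∈ Im(R) and ‖v − f₀‖ ≤ σ − (L_f + L_G)·‖x‖, and every consistent pair (f̂, Ĝ), there exists u ∈ ℝᵐ with ‖u‖ ≤ 1 such that v = f̂(x) + Ĝ(x)·u. In particular, the set B(f₀; σ − (L_f + L_G)‖x‖) ∩ (f₀ + Im(G₀)) is contained in the guaranteed velocity set V^G_x. -/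
open Matrix Set

/-- A pair `(fh, Gh)` consistent with the prior knowledge of the dynamics. -/
structure Consistent {n m : ℕ} (R : Matrix (Fin n) (Fin m) ℝ) (Lf LG : ℝ)
    (f₀ : EuclideanSpace ℝ (Fin n)) (G₀ : Matrix (Fin n) (Fin m) ℝ)
    (fh : EuclideanSpace ℝ (Fin n) → EuclideanSpace ℝ (Fin n))
    (Gh : EuclideanSpace ℝ (Fin n) → Matrix (Fin n) (Fin m) ℝ) : Prop where
  lipf : ∀ y z, ‖fh y - fh z‖ ≤ Lf * ‖y - z‖
  lipG : ∀ y z, matOpNorm (Gh y - Gh z) ≤ LG * ‖y - z‖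
  f_zero : fh 0 = f₀
  G_zero : Gh 0 = G₀
  f_im : ∀ y, fh y ∈ colSpace R
  factor : ∃ Hh : EuclideanSpace ℝ (Fin n) → Matrix (Fin m) (Fin m) ℝ,
    IsUnit (Hh 0) ∧ ∀ y, Gh y = R * Hh y

/-- The guaranteed velocity set at `x`. -/
noncomputable def GVS {n m : ℕ} (R : Matrix (Fin n) (Fin m) ℝ) (Lf LG : ℝ)
    (f₀ : EuclideanSpace ℝ (Fin n)) (G₀ : Matrix (Fin n) (Fin m) ℝ)
    (x : EuclideanSpace ℝ (Fin n)) : Set (EuclideanSpace ℝ (Fin n)) :=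
  ⋂ (fh : EuclideanSpace ℝ (Fin n) → EuclideanSpace ℝ (Fin n))
    (Gh : EuclideanSpace ℝ (Fin n) → Matrix (Fin n) (Fin m) ℝ)
    (_ : Consistent R Lf LG f₀ G₀ fh Gh),
      {w | ∃ u : EuclideanSpace ℝ (Fin m), ‖u‖ ≤ 1 ∧ w = fh x + appMat (Gh x) u}

/-! On `(ker G₀)ᗮ` the matrix `G₀` stretches every vector by at least `σ`, and
`‖Ĝ(x) - G₀‖ ≤ L_G ‖x‖`, so `Ĝ(x)` stretches `(ker G₀)ᗮ` by at least `σ - L_G ‖x‖ > 0`.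
Being injective there, with image inside `Im Ĝ(x) ⊆ Im R = Im G₀`, it maps `(ker G₀)ᗮ` onto
`Im G₀` by a dimension count. The target `v - f̂(x) ∈ Im G₀` has norm at most
`‖v - f₀‖ + L_f ‖x‖ ≤ σ - L_G ‖x‖`, so its preimage in `(ker G₀)ᗮ` has norm at most `1`. -/

open scoped RealInnerProductSpace

section Perturbation

variable {E F : Type*} [NormedAddCommGroup E] [InnerProductSpace ℝ E] [FiniteDimensional ℝ E]
  [NormedAddCommGroup F] [Module ℝ F]

theorem exists_mem_orthogonal_ker_apply_eq {T₀ T : E →ₗ[ℝ] F}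
    (hinj : ∀ u ∈ (LinearMap.ker T₀)ᗮ, T u = 0 → u = 0)
    (hrange : LinearMap.range T ≤ LinearMap.range T₀) {w : F} (hw : w ∈ LinearMap.range T₀) :
    ∃ u ∈ (LinearMap.ker T₀)ᗮ, T u = w := by
  have hinjK : Function.Injective (T ∘ₗ (LinearMap.ker T₀)ᗮ.subtype) := by
    rw [← LinearMap.ker_eq_bot, LinearMap.ker_eq_bot']
    exact fun u hu => Subtype.ext (hinj u u.2 hu)
  -- `dim (ker T₀)ᗮ = dim E - dim (ker T₀) = dim (range T₀)`
  have hfinrank : Module.finrank ℝ (LinearMap.range T₀) ≤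
      Module.finrank ℝ (LinearMap.range (T ∘ₗ (LinearMap.ker T₀)ᗮ.subtype)) := by
    have hker := (LinearMap.ker T₀).finrank_add_finrank_orthogonal
    have hrank := T₀.finrank_range_add_finrank_ker
    rw [LinearMap.finrank_range_of_inj hinjK]
    omega
  have heq := Submodule.eq_of_le_of_finrank_le
    ((LinearMap.range_comp_le_range _ _).trans hrange) hfinrank
  obtain ⟨u, rfl⟩ := heq ▸ hw
  exact ⟨u, u.2, rfl⟩

theorem exists_apply_eq_norm_le_of_perturbation {T₀ T : E →ₗ[ℝ] F} {σ δ : ℝ}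
    (hT₀ : ∀ u ∈ (LinearMap.ker T₀)ᗮ, σ * ‖u‖ ≤ ‖T₀ u‖)
    (hT : ∀ u, ‖T u - T₀ u‖ ≤ δ * ‖u‖) (hδσ : δ < σ)
    (hrange : LinearMap.range T ≤ LinearMap.range T₀) {w : F} (hw : w ∈ LinearMap.range T₀) :
    ∃ u, T u = w ∧ (σ - δ) * ‖u‖ ≤ ‖w‖ := by
  have hlower : ∀ u ∈ (LinearMap.ker T₀)ᗮ, (σ - δ) * ‖u‖ ≤ ‖T u‖ := fun u hu => by
    linarith [hT₀ u hu, hT u, norm_le_norm_add_norm_sub (T u) (T₀ u)]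
  have hinj : ∀ u ∈ (LinearMap.ker T₀)ᗮ, T u = 0 → u = 0 := fun u hu hTu => by
    have hu₀ := hlower u hu
    rw [hTu, norm_zero] at hu₀
    exact norm_le_zero_iff.mp (nonpos_of_mul_nonpos_right hu₀ (by linarith))
  obtain ⟨u, hu, rfl⟩ := exists_mem_orthogonal_ker_apply_eq hinj hrange hw
  exact ⟨u, rfl, hlower u hu⟩

end Perturbation

section MinSingularValue

namespace Matrix.IsHermitian

variable {ι : Type*} [Fintype ι] [DecidableEq ι] {A : Matrix ι ι ℝ}

theorem toEuclideanLin_eigenvectorBasis (hA : A.IsHermitian) (i : ι) :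
    toEuclideanLin A (hA.eigenvectorBasis i) = hA.eigenvalues i • hA.eigenvectorBasis i := by
  ext j
  simpa [toLpLin_apply] using congrFun (hA.mulVec_eigenvectorBasis i) j

theorem inner_toEuclideanLin_self (hA : A.IsHermitian) (u : EuclideanSpace ℝ ι) :
    ⟪u, toEuclideanLin A u⟫ = ∑ i, hA.eigenvalues i * ⟪hA.eigenvectorBasis i, u⟫ ^ 2 := by
  rw [← hA.eigenvectorBasis.sum_inner_mul_inner]
  refine Finset.sum_congr rfl fun i _ => ?_
  rw [← (isSymmetric_toEuclideanLin_iff.mpr hA), hA.toEuclideanLin_eigenvectorBasis,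
    real_inner_smul_left, real_inner_comm u]
  ring

end Matrix.IsHermitian

variable {n m : ℕ} (G : Matrix (Fin n) (Fin m) ℝ)

theorem norm_toEuclideanLin_sq_eq_inner (u : EuclideanSpace ℝ (Fin m)) :
    ‖toEuclideanLin G u‖ ^ 2 = ⟪u, toEuclideanLin (Gᴴ * G) u⟫ := by
  rw [toLpLin_mul_same, LinearMap.comp_apply, toEuclideanLin_conjTranspose_eq_adjoint,
    LinearMap.adjoint_inner_right, real_inner_self_eq_norm_sq]

theorem eigenvectorBasis_conjTranspose_mul_self_mem_ker {i : Fin m}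
    (hi : (isHermitian_conjTranspose_mul_self G).eigenvalues i = 0) :
    (isHermitian_conjTranspose_mul_self G).eigenvectorBasis i ∈
      LinearMap.ker (toEuclideanLin G) := by
  rw [LinearMap.mem_ker, ← norm_eq_zero, ← sq_eq_zero_iff, norm_toEuclideanLin_sq_eq_inner,
    IsHermitian.toEuclideanLin_eigenvectorBasis, hi, zero_smul, inner_zero_right]

theorem minSV_sq_le_eigenvalue {i : Fin m}
    (hi : (isHermitian_conjTranspose_mul_self G).eigenvalues i ≠ 0) :
    minSV G ^ 2 ≤ (isHermitian_conjTranspose_mul_self G).eigenvalues i := by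
  set S := {μ : ℝ | μ ≠ 0 ∧ ∃ j, (isHermitian_conjTranspose_mul_self G).eigenvalues j = μ}
  have hS : S.Finite := (Set.finite_range _).subset fun _ ⟨_, j, hj⟩ => ⟨j, hj⟩
  have hS₀ : 0 ≤ sInf S := Real.sInf_nonneg fun _ ⟨_, j, hj⟩ =>
    hj ▸ eigenvalues_conjTranspose_mul_self_nonneg G j
  rw [minSV, Real.sq_sqrt hS₀]
  exact csInf_le hS.bddBelow ⟨hi, i, rfl⟩

theorem minSV_mul_norm_le_norm_toEuclideanLin {u : EuclideanSpace ℝ (Fin m)}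
    (hu : u ∈ (LinearMap.ker (toEuclideanLin G))ᗮ) :
    minSV G * ‖u‖ ≤ ‖toEuclideanLin G u‖ := by
  set hG := isHermitian_conjTranspose_mul_self G
  rw [← sq_le_sq₀ (by unfold minSV; positivity) (norm_nonneg _), mul_pow,
    ← hG.eigenvectorBasis.sum_sq_inner_right, Finset.mul_sum, norm_toEuclideanLin_sq_eq_inner,
    hG.inner_toEuclideanLin_self]
  refine Finset.sum_le_sum fun i _ => ?_
  by_cases hi : hG.eigenvalues i = 0
  -- the coefficient of `u` along an eigenvector in `ker G` vanishes
  · rw [hi, (Submodule.mem_orthogonal _ u).mp hu _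
      (eigenvectorBasis_conjTranspose_mul_self_mem_ker G hi)]
    simp
  · exact mul_le_mul_of_nonneg_right (minSV_sq_le_eigenvalue G hi) (sq_nonneg _)

end MinSingularValue

section ColSpace

variable {n m k : ℕ}

theorem norm_toEuclideanLin_le_matOpNorm (M : Matrix (Fin n) (Fin m) ℝ)
    (u : EuclideanSpace ℝ (Fin m)) : ‖toEuclideanLin M u‖ ≤ matOpNorm M * ‖u‖ :=
  (LinearMap.toContinuousLinearMap (toEuclideanLin M)).le_opNorm u

theorem colSpace_mul_le (A : Matrix (Fin n) (Fin m) ℝ) (B : Matrix (Fin m) (Fin k) ℝ) :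
    colSpace (A * B) ≤ colSpace A := by
  rw [colSpace, toLpLin_mul_same]
  exact LinearMap.range_comp_le_range _ _

theorem colSpace_mul_of_isUnit (A : Matrix (Fin n) (Fin m) ℝ) {B : Matrix (Fin m) (Fin m) ℝ}
    (hB : IsUnit B) : colSpace (A * B) = colSpace A := by
  have hsurj : Function.Surjective (toEuclideanLin B) :=
    ((Module.End.isUnit_iff _).mp (hB.map (toLpLinAlgEquiv (R := ℝ) (p := 2)))).2
  rw [colSpace, toLpLin_mul_same]
  exact LinearMap.range_comp_of_range_eq_top _ (LinearMap.range_eq_top.mpr hsurj)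

end ColSpace

namespace Consistent

variable {n m : ℕ} {R : Matrix (Fin n) (Fin m) ℝ} {Lf LG : ℝ} {f₀ : EuclideanSpace ℝ (Fin n)}
  {G₀ : Matrix (Fin n) (Fin m) ℝ} {fh : EuclideanSpace ℝ (Fin n) → EuclideanSpace ℝ (Fin n)}
  {Gh : EuclideanSpace ℝ (Fin n) → Matrix (Fin n) (Fin m) ℝ}

theorem norm_sub_f_zero_le (hc : Consistent R Lf LG f₀ G₀ fh Gh) (x : EuclideanSpace ℝ (Fin n)) :
    ‖fh x - f₀‖ ≤ Lf * ‖x‖ := by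
  simpa [hc.f_zero] using hc.lipf x 0

theorem matOpNorm_sub_G_zero_le (hc : Consistent R Lf LG f₀ G₀ fh Gh)
    (x : EuclideanSpace ℝ (Fin n)) : matOpNorm (Gh x - G₀) ≤ LG * ‖x‖ := by
  simpa [hc.G_zero] using hc.lipG x 0

theorem colSpace_eq (hc : Consistent R Lf LG f₀ G₀ fh Gh) : colSpace R = colSpace G₀ := by
  obtain ⟨Hh, hH₀, hGh⟩ := hc.factor
  rw [← hc.G_zero, hGh, colSpace_mul_of_isUnit R hH₀]

theorem f_mem_colSpace (hc : Consistent R Lf LG f₀ G₀ fh Gh) (x : EuclideanSpace ℝ (Fin n)) :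
    fh x ∈ colSpace G₀ :=
  hc.colSpace_eq ▸ hc.f_im x

theorem colSpace_le (hc : Consistent R Lf LG f₀ G₀ fh Gh) (x : EuclideanSpace ℝ (Fin n)) :
    colSpace (Gh x) ≤ colSpace G₀ := by
  obtain ⟨Hh, -, hGh⟩ := hc.factor
  rw [← hc.colSpace_eq, hGh]
  exact colSpace_mul_le R (Hh x)

theorem exists_control (hc : Consistent R Lf LG f₀ G₀ fh Gh) {x : EuclideanSpace ℝ (Fin n)}
    (hx : (Lf + LG) * ‖x‖ < minSV G₀) {v : EuclideanSpace ℝ (Fin n)}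
    (hv : v - f₀ ∈ colSpace G₀) (hvf₀ : ‖v - f₀‖ ≤ minSV G₀ - (Lf + LG) * ‖x‖) :
    ∃ u : EuclideanSpace ℝ (Fin m), ‖u‖ ≤ 1 ∧ v = fh x + appMat (Gh x) u := by
  have hf := hc.norm_sub_f_zero_le x
  have hG : ∀ u, ‖toEuclideanLin (Gh x) u - toEuclideanLin G₀ u‖ ≤ LG * ‖x‖ * ‖u‖ := fun u => by
    rw [← LinearMap.sub_apply, ← map_sub]
    exact (norm_toEuclideanLin_le_matOpNorm _ u).trans
      (mul_le_mul_of_nonneg_right (hc.matOpNorm_sub_G_zero_le x) (norm_nonneg u))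
  have hw : v - fh x ∈ colSpace G₀ := by
    have hf₀ : f₀ ∈ colSpace G₀ := hc.f_zero ▸ hc.f_mem_colSpace 0
    simpa only [sub_add_sub_cancel] using
      (colSpace G₀).add_mem hv ((colSpace G₀).sub_mem hf₀ (hc.f_mem_colSpace x))
  have hwnorm : ‖v - fh x‖ ≤ minSV G₀ - LG * ‖x‖ := by
    linarith [norm_sub_le_norm_sub_add_norm_sub v f₀ (fh x), norm_sub_rev f₀ (fh x)]
  -- `0 ≤ ‖fh x - f₀‖ ≤ Lf ‖x‖`, so the perturbation `LG ‖x‖` of `G₀` is smaller than `σ`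
  have hσ : 0 < minSV G₀ - LG * ‖x‖ := by linarith [norm_nonneg (fh x - f₀)]
  obtain ⟨u, hu, hubound⟩ := exists_apply_eq_norm_le_of_perturbation
    (fun u hu => minSV_mul_norm_le_norm_toEuclideanLin G₀ hu) hG (by linarith)
    (hc.colSpace_le x) hw
  refine ⟨u, le_of_mul_le_mul_left (by linarith) hσ, ?_⟩
  rw [appMat, hu, add_sub_cancel]

end Consistent

theorem theorem1_ball_underapprox_general {n m : ℕ} (R : Matrix (Fin n) (Fin m) ℝ)
    (Lf LG : ℝ)
    (f₀ : EuclideanSpace ℝ (Fin n))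
    (G₀ : Matrix (Fin n) (Fin m) ℝ)
    (x : EuclideanSpace ℝ (Fin n)) (hx : (Lf + LG) * ‖x‖ < minSV G₀) :
    (∀ v : EuclideanSpace ℝ (Fin n), v - f₀ ∈ colSpace G₀ →
      ‖v - f₀‖ ≤ minSV G₀ - (Lf + LG) * ‖x‖ →
      ∀ fh Gh, Consistent R Lf LG f₀ G₀ fh Gh →
        ∃ u : EuclideanSpace ℝ (Fin m), ‖u‖ ≤ 1 ∧ v = fh x + appMat (Gh x) u) ∧
    Metric.closedBall f₀ (minSV G₀ - (Lf + LG) * ‖x‖) ∩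
        {v | v - f₀ ∈ colSpace G₀} ⊆ GVS R Lf LG f₀ G₀ x := by
  refine ⟨fun _ hv hvf₀ _ _ hc => hc.exists_control hx hv hvf₀, fun v ⟨hball, hv⟩ => ?_⟩
  rw [Metric.mem_closedBall, dist_eq_norm] at hball
  simp only [GVS, Set.mem_iInter]
  exact fun _ _ hc => hc.exists_control hx hv hball

/-- **Theorem 1.** If `(L_f + L_G)‖x‖ < σ`, every `v` with
`v − f₀ ∈ Im G₀` and `‖v − f₀‖ ≤ σ − (L_f + L_G)‖x‖` is achieved by every
consistent pair with an admissible control; in particular the ball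
`B(f₀; σ − (L_f + L_G)‖x‖) ∩ (f₀ + Im G₀)` is contained in the GVS at `x`. -/
theorem theorem1_ball_underapprox {n m : ℕ} (R : Matrix (Fin n) (Fin m) ℝ)
    (Lf LG : ℝ) (hLf : 0 < Lf) (hLG : 0 < LG)
    (f₀ : EuclideanSpace ℝ (Fin n)) (hf₀ : f₀ ∈ colSpace R)
    (H₀ : Matrix (Fin m) (Fin m) ℝ) (hH₀ : IsUnit H₀)
    (G₀ : Matrix (Fin n) (Fin m) ℝ) (hG₀fac : G₀ = R * H₀) (hG₀ : G₀ ≠ 0)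
    (x : EuclideanSpace ℝ (Fin n)) (hx : (Lf + LG) * ‖x‖ < minSV G₀) :
    (∀ v : EuclideanSpace ℝ (Fin n), v - f₀ ∈ colSpace G₀ →
      ‖v - f₀‖ ≤ minSV G₀ - (Lf + LG) * ‖x‖ →
      ∀ fh Gh, Consistent R Lf LG f₀ G₀ fh Gh →
        ∃ u : EuclideanSpace ℝ (Fin m), ‖u‖ ≤ 1 ∧ v = fh x + appMat (Gh x) u) ∧
    Metric.closedBall f₀ (minSV G₀ - (Lf + LG) * ‖x‖) ∩
        {v | v - f₀ ∈ colSpace G₀} ⊆ GVS R Lf LG f₀ G₀ x :=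
  theorem1_ball_underapprox_general R Lf LG f₀ G₀ x hx
end
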